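/- arXiv:1709.10422 — 6 statements merged into one kernel-verified Lean document; each statement's English description precedes it below -/
import Mathlib

section
/- Let G be a powerful finite p-group that can be generated by 2 elements. Then every subgroup of G is powerful. -/
/-- The subgroup generated by `n`-th powers of elements of `H`. -/
def subPow {G : Type*} [Group G] (H : Subgroup G) (n : ℕ) : Subgroup G :=
  Subgroup.closure ((· ^ n) '' (H : Set G))

/-- A subgroup `H` of a (finite) `p`-group is powerful if `H' ≤ H^p` for `p` odd,
or `H' ≤ H^4` for `p = 2`. -/
def IsPowerfulSubgroup (p : ℕ) {G : Type*} [Group G] (H : Subgroup G) : Prop :=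
  if p = 2 then ⁅H, H⁆ ≤ subPow H 4 else ⁅H, H⁆ ≤ subPow H p

/-!
Write `V = G^p` and `q = powerfulExponent p`. The engine is the Lubotzky–Mann inclusion
`[V, G] ≤ V^q` for powerful `G`: by induction on `|G|` one may assume `V^q = 1` and, after
dividing by a central subgroup of order `p`, that `[V, G]` is central of exponent `p`; the
collection formulas then make every `p`-th power central. Hence modulo `V^p [V, G]` the `p`-th
power map is a homomorphism, and `G = ⟨a, b⟩` forces `V = ⟨a^p, b^p⟩` by the Frattini argument.
A maximal subgroup `M` contains `V` and there are generators `G = ⟨u, z⟩` with `u ∈ M`; then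
`M = ⟨u⟩V = ⟨u, z^p⟩` is again 2-generated, and it is powerful since `V` is central modulo `V^q`.
Every proper subgroup lies in such an `M`, so induction on `|G|` concludes.
-/

open Subgroup
open scoped commutatorElement

section SubPow

variable {G G' : Type*} [Group G] [Group G'] {H K : Subgroup G} {n : ℕ}

theorem pow_mem_subPow {x : G} (hx : x ∈ H) (n : ℕ) : x ^ n ∈ subPow H n :=
  subset_closure ⟨x, hx, rfl⟩

theorem subPow_le_iff : subPow H n ≤ K ↔ ∀ x ∈ H, x ^ n ∈ K := by
  simp [subPow, closure_le, Set.subset_def]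

theorem subPow_le_self (H : Subgroup G) (n : ℕ) : subPow H n ≤ H :=
  subPow_le_iff.2 fun _ hx => pow_mem hx n

theorem subPow_mono (h : H ≤ K) (n : ℕ) : subPow H n ≤ subPow K n :=
  subPow_le_iff.2 fun _ hx => pow_mem_subPow (h hx) n

theorem subPow_mul_le_subPow_subPow (H : Subgroup G) (m n : ℕ) :
    subPow H (m * n) ≤ subPow (subPow H m) n :=
  subPow_le_iff.2 fun x hx => pow_mul x m n ▸ pow_mem_subPow (pow_mem_subPow hx m) n

theorem subPow_mul_le (H : Subgroup G) (m n : ℕ) : subPow H (m * n) ≤ subPow H m :=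
  (subPow_mul_le_subPow_subPow H m n).trans (subPow_le_self _ n)

theorem map_subPow (f : G →* G') (H : Subgroup G) (n : ℕ) :
    (subPow H n).map f = subPow (H.map f) n := by
  simp only [subPow, MonoidHom.map_closure, ← Set.image_comp, coe_map]
  congr 1
  ext
  simp

instance subPow_normal [hH : H.Normal] (n : ℕ) : (subPow H n).Normal := by
  rw [← normalizer_eq_top_iff, eq_top_iff, subPow, le_normalizer_closure_iff]
  rintro g - - ⟨x, hx, rfl⟩
  rw [← conj_pow]
  exact pow_mem_subPow (hH.conj_mem x hx g) n

theorem commutator_le_subPow_map_iff (f : G →* G') (hf : Function.Injective f) :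
    ⁅H.map f, H.map f⁆ ≤ subPow (H.map f) n ↔ ⁅H, H⁆ ≤ subPow H n := by
  rw [← map_commutator, ← map_subPow, map_le_map_iff_of_injective hf]

end SubPow

section Frattini

variable {p : ℕ} [hp : Fact p.Prime] {G : Type*} [Group G] [Finite G] {M : Subgroup G}

theorem IsPGroup.index_eq_of_isCoatom (hG : IsPGroup p G) (hM : IsCoatom M) : M.index = p := by
  obtain ⟨k, hk⟩ := IsPGroup.iff_card.1 (hG.to_subgroup M)
  obtain ⟨j, hj⟩ := hG.index M
  have hj0 : j ≠ 0 := by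
    rintro rfl
    exact hM.1 (index_eq_one.1 (by simpa using hj))
  have hcard : Nat.card G = p ^ k * p ^ j := by rw [← hk, ← hj, card_mul_index]
  obtain ⟨K, hK, hMK⟩ := Sylow.exists_subgroup_card_pow_succ
    (hcard ▸ mul_dvd_mul_left _ (dvd_pow_self p hj0)) hk
  have hKM : M ≠ K := fun h =>
    (Nat.pow_right_injective hp.out.two_le).ne k.lt_succ_self.ne (hk.symm.trans (h ▸ hK))
  have hKtop : K = ⊤ := hM.lt_iff.1 (hMK.lt_of_ne hKM)
  rw [hKtop, card_top, hcard, pow_succ] at hK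
  rw [hj, Nat.eq_of_mul_eq_mul_left (pow_pos hp.out.pos k) hK]

theorem IsPGroup.normal_of_isCoatom (hG : IsPGroup p G) (hM : IsCoatom M) : M.Normal :=
  have := hG.isNilpotent
  Group.normalizerCondition_of_isNilpotent.normal_of_coatom M hM

theorem IsPGroup.pow_mem_of_isCoatom (hG : IsPGroup p G) (hM : IsCoatom M) (g : G) :
    g ^ p ∈ M := by
  have := hG.normal_of_isCoatom hM
  simpa [hG.index_eq_of_isCoatom hM] using M.pow_index_mem g

theorem IsPGroup.subPow_top_le_frattini (hG : IsPGroup p G) : subPow ⊤ p ≤ frattini G :=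
  subPow_le_iff.2 fun g _ => by
    simpa [frattini, Order.radical] using fun M hM => hG.pow_mem_of_isCoatom hM g

theorem IsPGroup.eq_of_sup_subPow_eq (hG : IsPGroup p G) {K W : Subgroup G} (hKW : K ≤ W)
    (h : K ⊔ subPow W p = W) : K = W := by
  suffices hK : K.subgroupOf W = ⊤ from le_antisymm hKW (subgroupOf_eq_top.1 hK)
  apply frattini_nongenerating
  refine eq_top_mono (sup_le_sup_left (hG.to_subgroup W).subPow_top_le_frattini _) ?_
  apply map_injective W.subtype_injective
  rw [Subgroup.map_sup, subgroupOf_map_subtype, map_subPow, ← MonoidHom.range_eq_map,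
    range_subtype, inf_eq_left.2 hKW, h]

end Frattini

section Collection

variable {G : Type*} [Group G]

theorem Nat.choose_two_succ (n : ℕ) : (n + 1).choose 2 = n.choose 2 + n := by
  rw [Nat.choose_succ_succ, Nat.choose_one_right, add_comm]

theorem Nat.Prime.dvd_choose_two {p : ℕ} (hp : p.Prime) (hp2 : p ≠ 2) : p ∣ p.choose 2 :=
  hp.dvd_choose_self two_ne_zero (lt_of_le_of_ne hp.two_le (Ne.symm hp2))

theorem commutatorElement_pow_left {x u : G} (he : ⁅x, ⁅x, u⁆⁆ ∈ center G) (n : ℕ) :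
    ⁅x ^ n, u⁆ = ⁅x, ⁅x, u⁆⁆ ^ n.choose 2 * ⁅x, u⁆ ^ n := by
  set c := ⁅x, u⁆
  set e := ⁅x, c⁆
  have hxc : x * c * x⁻¹ = e * c := by simp [e, commutatorElement_def]
  have hxe : x * e * x⁻¹ = e := by rw [mem_center_iff.1 he x, mul_inv_cancel_right]
  induction n with
  | zero => simp
  | succ n ih =>
    calc ⁅x ^ (n + 1), u⁆ = x * (e ^ n.choose 2 * c ^ n) * x⁻¹ * c := by
          rw [pow_succ', commutatorElement_mul_left_eq_conj_mul, ih]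
    _ = (x * e * x⁻¹) ^ n.choose 2 * (x * c * x⁻¹) ^ n * c := by
          simp only [conj_pow]
          group
    _ = e ^ (n + 1).choose 2 * c ^ (n + 1) := by
          rw [hxe, hxc, (show Commute e c from (mem_center_iff.1 he c).symm).mul_pow,
            Nat.choose_two_succ, pow_add, pow_succ]
          group

theorem commutatorElement_pow_left_of_mem_center {x u : G} (h : ⁅x, u⁆ ∈ center G) (n : ℕ) :
    ⁅x ^ n, u⁆ = ⁅x, u⁆ ^ n := by
  have hxc : ⁅x, ⁅x, u⁆⁆ = 1 :=
    commutatorElement_eq_one_iff_commute.2 (mem_center_iff.1 h x)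
  rw [commutatorElement_pow_left (hxc ▸ one_mem _) n, hxc, one_pow, one_mul]

theorem mem_center_of_commutatorElement_eq_one {z : G} (h : ∀ g : G, ⁅z, g⁆ = 1) :
    z ∈ center G :=
  mem_center_iff.2 fun g => (commutatorElement_eq_one_iff_commute.1 (h g)).symm.eq

theorem pow_eq_one_of_mem_closure {S : Set G} {n : ℕ} (hS : closure S ≤ center G)
    (h : ∀ s ∈ S, s ^ n = 1) {x : G} (hx : x ∈ closure S) : x ^ n = 1 := by
  induction hx using closure_induction with
  | mem s hs => exact h s hs
  | one => exact one_pow n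
  | mul y z hy _ ihy ihz =>
    rw [(show Commute y z from (mem_center_iff.1 (hS hy) z).symm).mul_pow, ihy, ihz, one_mul]
  | inv y _ ihy => rw [inv_pow, ihy, inv_one]

theorem mul_pow_of_commutatorElement_mem_center {a b : G} (hc : ⁅b, a⁆ ∈ center G) (n : ℕ) :
    (a * b) ^ n = ⁅b, a⁆ ^ n.choose 2 * a ^ n * b ^ n := by
  set c := ⁅b, a⁆
  have hcomm : ∀ g, Commute g c := fun g => mem_center_iff.1 hc g
  have hba : ∀ k, b ^ k * a = c ^ k * a * b ^ k := fun k => by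
    rw [← commutatorElement_pow_left_of_mem_center hc, commutatorElement_def]
    group
  induction n with
  | zero => simp
  | succ n ih =>
    calc (a * b) ^ (n + 1) = c ^ n.choose 2 * a ^ n * (b ^ n * a) * b := by
          rw [pow_succ, ih]; group
    _ = c ^ n.choose 2 * (a ^ n * c ^ n) * a * b ^ n * b := by rw [hba]; group
    _ = c ^ (n + 1).choose 2 * a ^ (n + 1) * b ^ (n + 1) := by
          rw [((hcomm _).pow_right n).eq, Nat.choose_two_succ, pow_add, pow_succ, pow_succ]
          group

end Collection

def powerfulExponent (p : ℕ) : ℕ := if p = 2 then 4 else p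

theorem isPowerfulSubgroup_iff {p : ℕ} {G : Type*} [Group G] {H : Subgroup G} :
    IsPowerfulSubgroup p H ↔ ⁅H, H⁆ ≤ subPow H (powerfulExponent p) := by
  unfold IsPowerfulSubgroup powerfulExponent
  split_ifs <;> rfl

section LubotzkyMann

variable {G G' : Type*} [Group G] [Group G'] {p : ℕ}

theorem subPow_powerfulExponent_le (H : Subgroup G) (p : ℕ) :
    subPow H (powerfulExponent p) ≤ subPow H p := by
  unfold powerfulExponent
  split_ifs with h
  · exact h ▸ subPow_mul_le H 2 2
  · exact le_rfl

theorem commutator_top_le_subPow_top_of_surjective {f : G →* G'} (hf : Function.Surjective f)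
    {n : ℕ} (h : ⁅(⊤ : Subgroup G), ⊤⁆ ≤ subPow (⊤ : Subgroup G) n) :
    ⁅(⊤ : Subgroup G'), ⊤⁆ ≤ subPow (⊤ : Subgroup G') n := by
  simpa [map_commutator, map_subPow, map_top_of_surjective f hf] using map_mono (f := f) h

theorem commutator_subPow_top_le_sup_ker {f : G →* G'} (hf : Function.Surjective f) {m n : ℕ}
    (h : ⁅subPow (⊤ : Subgroup G') m, ⊤⁆ ≤ subPow (subPow (⊤ : Subgroup G') m) n) :
    ⁅subPow (⊤ : Subgroup G) m, ⊤⁆ ≤ subPow (subPow (⊤ : Subgroup G) m) n ⊔ f.ker := by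
  rwa [← comap_map_eq, ← map_le_iff_le_comap, map_commutator, map_subPow, map_subPow,
    map_subPow, map_top_of_surjective f hf]

theorem sq_mem_center {N : Subgroup G} (hpow : ⁅(⊤ : Subgroup G), ⊤⁆ ≤ subPow (⊤ : Subgroup G) 4)
    (hX : ∀ v ∈ subPow (⊤ : Subgroup G) 2, v ^ 4 = 1) (hN : ⁅subPow (⊤ : Subgroup G) 2, ⊤⁆ ≤ N)
    (hNc : N ≤ center G) (hNp : ∀ z ∈ N, z ^ 2 = 1) (x : G) : x ^ 2 ∈ center G := by
  have hsq : ∀ v ∈ subPow ⊤ 2, v ^ 2 ∈ center G := fun v hv =>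
    mem_center_of_commutatorElement_eq_one fun g => by
      have hc := hN (commutator_mem_commutator hv (mem_top g))
      rw [commutatorElement_pow_left_of_mem_center (hNc hc), hNp _ hc]
  have hW : subPow (subPow ⊤ 2) 2 ≤ center G := subPow_le_iff.2 hsq
  have hc : ∀ g, ⁅x, g⁆ ∈ subPow (subPow ⊤ 2) 2 := fun g =>
    subPow_mul_le_subPow_subPow ⊤ 2 2 (hpow (commutator_mem_commutator (mem_top x) (mem_top g)))
  refine mem_center_of_commutatorElement_eq_one fun g => ?_
  rw [commutatorElement_pow_left_of_mem_center (hW (hc g))]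
  refine pow_eq_one_of_mem_closure hW ?_ (hc g)
  rintro - ⟨v, hv, rfl⟩
  rw [← pow_mul]
  exact hX v hv

theorem pow_mem_center_of_ne_two [hp : Fact p.Prime] (hp2 : p ≠ 2) {N : Subgroup G}
    (hpow : ⁅(⊤ : Subgroup G), ⊤⁆ ≤ subPow (⊤ : Subgroup G) p)
    (hX : ∀ v ∈ subPow (⊤ : Subgroup G) p, v ^ p = 1) (hN : ⁅subPow (⊤ : Subgroup G) p, ⊤⁆ ≤ N)
    (hNc : N ≤ center G) (hNp : ∀ z ∈ N, z ^ p = 1) (x : G) : x ^ p ∈ center G := by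
  refine mem_center_of_commutatorElement_eq_one fun g => ?_
  have hc : ⁅x, g⁆ ∈ subPow ⊤ p := hpow (commutator_mem_commutator (mem_top x) (mem_top g))
  have he : ⁅x, ⁅x, g⁆⁆ ∈ N :=
    hN (commutator_comm (G := G) _ _ ▸ commutator_mem_commutator (mem_top x) hc)
  obtain ⟨k, hk⟩ := hp.out.dvd_choose_two hp2
  rw [commutatorElement_pow_left (hNc he), hk, pow_mul, hNp _ he, hX _ hc, one_pow, one_mul]

theorem subPow_top_le_center [Fact p.Prime] {N : Subgroup G}
    (hpow : ⁅(⊤ : Subgroup G), ⊤⁆ ≤ subPow (⊤ : Subgroup G) (powerfulExponent p))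
    (hX : subPow (subPow (⊤ : Subgroup G) p) (powerfulExponent p) = ⊥)
    (hN : ⁅subPow (⊤ : Subgroup G) p, ⊤⁆ ≤ N) (hNc : N ≤ center G) (hNp : ∀ z ∈ N, z ^ p = 1) :
    subPow (⊤ : Subgroup G) p ≤ center G := by
  have hX' : ∀ v ∈ subPow (⊤ : Subgroup G) p, v ^ powerfulExponent p = 1 := fun v hv =>
    mem_bot.1 (hX ▸ pow_mem_subPow hv _)
  refine subPow_le_iff.2 fun x _ => ?_
  rcases eq_or_ne p 2 with rfl | hp2
  · exact sq_mem_center hpow hX' hN hNc hNp x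
  · simp only [powerfulExponent, if_neg hp2] at hpow hX'
    exact pow_mem_center_of_ne_two hp2 hpow hX' hN hNc hNp x

theorem Subgroup.card_quotient_lt [Finite G] {N : Subgroup G} (hN : N ≠ ⊥) :
    Nat.card (G ⧸ N) < Nat.card G := by
  rw [card_eq_card_quotient_mul_card_subgroup N]
  exact lt_mul_of_one_lt_right Nat.card_pos ((one_lt_card_iff_ne_bot N).2 hN)

theorem IsPGroup.exists_ne_bot_le_center_pow_eq_one [Fact p.Prime] [Finite G] [Nontrivial G]
    (hG : IsPGroup p G) : ∃ N : Subgroup G, N ≠ ⊥ ∧ N ≤ center G ∧ ∀ z ∈ N, z ^ p = 1 := by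
  obtain ⟨n, hn0, hn⟩ := (hG.to_subgroup (center G)).nontrivial_iff_card.1 hG.center_nontrivial
  obtain ⟨z, hz⟩ := exists_prime_orderOf_dvd_card' p (hn ▸ dvd_pow_self p hn0.ne')
  have hz' : orderOf (z : G) = p := (orderOf_coe z).trans hz
  refine ⟨zpowers (z : G), ?_, zpowers_le.2 z.2, ?_⟩
  · rw [Ne, zpowers_eq_bot, ← orderOf_eq_one_iff, hz']
    exact (Fact.out : p.Prime).one_lt.ne'
  · rintro - ⟨k, rfl⟩
    rw [← hz']
    exact zpow_pow_orderOf

end LubotzkyMann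

theorem IsPGroup.commutator_subPow_top_le {p : ℕ} [Fact p.Prime] {G : Type*} [hGrp : Group G]
    [Finite G] (hG : IsPGroup p G)
    (hpow : ⁅(⊤ : Subgroup G), ⊤⁆ ≤ subPow (⊤ : Subgroup G) (powerfulExponent p)) :
    ⁅subPow (⊤ : Subgroup G) p, ⊤⁆ ≤ subPow (subPow (⊤ : Subgroup G) p) (powerfulExponent p) := by
  induction G using Finite.induction_subsingleton_or_nontrivial generalizing hGrp with
  | hbase G => simp [Subsingleton.elim _ (⊥ : Subgroup G)]
  | hstep G ih =>
    set V := subPow (⊤ : Subgroup G) p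
    set X := subPow V (powerfulExponent p)
    have hquot : ∀ N : Subgroup G, [N.Normal] → N ≠ ⊥ → ⁅V, ⊤⁆ ≤ X ⊔ N := fun N _ hN => by
      have hQ := ih (G ⧸ N) (card_quotient_lt hN) (hG.to_quotient N)
        (commutator_top_le_subPow_top_of_surjective (QuotientGroup.mk'_surjective N) hpow)
      simpa using commutator_subPow_top_le_sup_ker (QuotientGroup.mk'_surjective N) hQ
    by_cases hX : X = ⊥
    · obtain ⟨N, hN, hNc, hNp⟩ := hG.exists_ne_bot_le_center_pow_eq_one
      have : N.Normal := commutator_top_left_le_iff.1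
        ((commutator_top_left_eq_bot_iff_le_center.2 hNc).trans_le bot_le)
      have hVN : ⁅V, ⊤⁆ ≤ N := by simpa [hX] using hquot N hN
      rw [commutator_top_right_eq_bot_iff_le_center.2 (subPow_top_le_center hpow hX hVN hNc hNp)]
      exact bot_le
    · simpa using hquot X hX

section TwoGenerated

variable {p : ℕ} [hp : Fact p.Prime] {G : Type*} [Group G]

theorem pow_choose_two_mem_subPow_subPow {c : G}
    (hc : c ∈ subPow (⊤ : Subgroup G) (powerfulExponent p)) :
    c ^ p.choose 2 ∈ subPow (subPow (⊤ : Subgroup G) p) p := by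
  rcases eq_or_ne p 2 with rfl | hp2
  · simpa using subPow_mul_le_subPow_subPow ⊤ 2 2 hc
  · obtain ⟨k, hk⟩ := hp.out.dvd_choose_two hp2
    simp only [powerfulExponent, if_neg hp2] at hc
    rw [hk, pow_mul]
    exact pow_mem (pow_mem_subPow hc p) k

theorem mul_pow_quotient_of_subPow_le {D : Subgroup G} [D.Normal]
    (hpow : ⁅(⊤ : Subgroup G), ⊤⁆ ≤ subPow (⊤ : Subgroup G) (powerfulExponent p))
    (hVp : subPow (subPow (⊤ : Subgroup G) p) p ≤ D) (hVG : ⁅subPow (⊤ : Subgroup G) p, ⊤⁆ ≤ D)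
    (x y : G ⧸ D) : (x * y) ^ p = x ^ p * y ^ p := by
  obtain ⟨g, rfl⟩ := QuotientGroup.mk'_surjective D x
  obtain ⟨h, rfl⟩ := QuotientGroup.mk'_surjective D y
  have hc := hpow (commutator_mem_commutator (mem_top h) (mem_top g))
  have hcent : ⁅QuotientGroup.mk' D h, QuotientGroup.mk' D g⁆ ∈ center (G ⧸ D) := by
    refine mem_center_of_commutatorElement_eq_one fun z => ?_
    obtain ⟨k, rfl⟩ := QuotientGroup.mk'_surjective D z
    rw [← map_commutatorElement, ← map_commutatorElement, ← MonoidHom.mem_ker,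
      QuotientGroup.ker_mk']
    exact hVG (commutator_mem_commutator (subPow_powerfulExponent_le ⊤ p hc) (mem_top k))
  have hchoose : ⁅QuotientGroup.mk' D h, QuotientGroup.mk' D g⁆ ^ p.choose 2 = 1 := by
    rw [← map_commutatorElement, ← map_pow, ← MonoidHom.mem_ker, QuotientGroup.ker_mk']
    exact hVp (pow_choose_two_mem_subPow_subPow hc)
  rw [mul_pow_of_commutatorElement_mem_center hcent, hchoose, one_mul]

theorem IsPGroup.subPow_top_eq_closure_pow [Finite G] (hG : IsPGroup p G)
    (hpow : ⁅(⊤ : Subgroup G), ⊤⁆ ≤ subPow (⊤ : Subgroup G) (powerfulExponent p)) {a b : G}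
    (hab : closure {a, b} = ⊤) : subPow (⊤ : Subgroup G) p = closure {a ^ p, b ^ p} := by
  set V := subPow (⊤ : Subgroup G) p
  set U := closure {a ^ p, b ^ p}
  set D := subPow V p ⊔ ⁅V, ⊤⁆
  have hUV : U ≤ V := (closure_le _).2 <| by
    rintro _ (rfl | rfl) <;> exact pow_mem_subPow (mem_top _) p
  have hDV : D ≤ subPow V p :=
    sup_le le_rfl ((hG.commutator_subPow_top_le hpow).trans (subPow_powerfulExponent_le _ p))
  let powHom : G ⧸ D →* G ⧸ D :=
    { toFun := (· ^ p)
      map_one' := one_pow p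
      map_mul' := mul_pow_quotient_of_subPow_le hpow le_sup_left le_sup_right }
  have hpowU : ∀ x : G, x ^ p ∈ U ⊔ D := fun x => by
    have hmap :
        (closure {a, b}).map (powHom.comp (QuotientGroup.mk' D)) = U.map (QuotientGroup.mk' D) := by
      rw [MonoidHom.map_closure, MonoidHom.map_closure, Set.image_pair, Set.image_pair]
      rfl
    rw [hab] at hmap
    rw [← QuotientGroup.ker_mk' D, ← comap_map_eq, ← hmap]
    exact mem_map_of_mem _ (mem_top x)
  refine (hG.eq_of_sup_subPow_eq hUV (le_antisymm (sup_le hUV (subPow_le_self V p)) ?_)).symm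
  exact (subPow_le_iff.2 fun x _ => hpowU x).trans (sup_le_sup_left hDV U)

end TwoGenerated

section MaximalSubgroups

variable {p : ℕ} [Fact p.Prime] {G : Type*} [Group G] {M : Subgroup G}

theorem prime_dvd_of_zpow_mem [M.Normal] {z : G} (hz : z ∉ M) (hzp : z ^ p ∈ M) {k : ℤ}
    (hzk : z ^ k ∈ M) : (p : ℤ) ∣ k := by
  have ho : orderOf (z : G ⧸ M) = p := orderOf_eq_prime
    (by rwa [← QuotientGroup.mk_pow, QuotientGroup.eq_one_iff])
    (by rwa [Ne, QuotientGroup.eq_one_iff])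
  rw [← ho, orderOf_dvd_iff_zpow_eq_one, ← QuotientGroup.mk_zpow, QuotientGroup.eq_one_iff]
  exact hzk

theorem commutator_zpowers_sup_le {N X : Subgroup G} [N.Normal] [X.Normal] (hNX : ⁅N, ⊤⁆ ≤ X)
    (u : G) : ⁅zpowers u ⊔ N, zpowers u ⊔ N⁆ ≤ X := by
  have hcent : ∀ n ∈ N, QuotientGroup.mk' X n ∈ center (G ⧸ X) := fun n hn =>
    mem_center_of_commutatorElement_eq_one fun g => by
      obtain ⟨g, rfl⟩ := QuotientGroup.mk'_surjective X g
      rw [← map_commutatorElement, ← MonoidHom.mem_ker, QuotientGroup.ker_mk']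
      exact hNX (commutator_mem_commutator hn (mem_top g))
  rw [commutator_le]
  intro g₁ h₁ g₂ h₂
  obtain ⟨-, ⟨s, rfl⟩, n₁, hn₁, rfl⟩ := mem_sup_of_normal_right.1 h₁
  obtain ⟨-, ⟨t, rfl⟩, n₂, hn₂, rfl⟩ := mem_sup_of_normal_right.1 h₂
  rw [← QuotientGroup.ker_mk' X, MonoidHom.mem_ker, map_commutatorElement,
    commutatorElement_eq_one_iff_commute, map_mul, map_mul]
  refine Commute.mul_left (Commute.mul_right ?_ (mem_center_iff.1 (hcent n₂ hn₂) _))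
    (mem_center_iff.1 (hcent n₁ hn₁) _).symm
  simp only [map_zpow]
  exact (Commute.refl _).zpow_zpow s t

variable [Finite G]

theorem IsPGroup.exists_closure_pair_eq_top_of_isCoatom (hG : IsPGroup p G) {a b : G}
    (hab : closure {a, b} = ⊤) (hM : IsCoatom M) :
    ∃ u ∈ M, ∃ z ∉ M, closure {u, z} = ⊤ := by
  have := hG.normal_of_isCoatom hM
  have key : ∀ z w : G, z ∉ M → closure {z, w} = ⊤ → ∃ u ∈ M, closure {u, z} = ⊤ := by
    intro z w hz hzw
    have hsup : zpowers z ⊔ M = ⊤ := hM.lt_iff.1 (right_lt_sup.2 fun h => hz (h (mem_zpowers z)))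
    obtain ⟨-, ⟨k, rfl⟩, u, hu, hwu⟩ := mem_sup_of_normal_right.1 (hsup ▸ mem_top w)
    refine ⟨u, hu, eq_top_iff.2 (hzw ▸ (closure_le _).2 ?_)⟩
    rintro _ (rfl | rfl)
    · exact subset_closure (by simp)
    · rw [← hwu]
      exact mul_mem (zpow_mem (subset_closure (by simp)) k) (subset_closure (by simp))
  by_cases ha : a ∈ M
  · have hb : b ∉ M := fun hb => hM.1 <| eq_top_iff.2 <| hab ▸ (closure_le _).2 <| by
      rintro _ (rfl | rfl) <;> assumption
    obtain ⟨u, hu, hub⟩ := key b a hb (Set.pair_comm a b ▸ hab)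
    exact ⟨u, hu, b, hb, hub⟩
  · obtain ⟨u, hu, hua⟩ := key a b ha hab
    exact ⟨u, hu, a, ha, hua⟩

theorem IsPGroup.eq_zpowers_sup_subPow_of_isCoatom (hG : IsPGroup p G)
    (hpow : ⁅(⊤ : Subgroup G), ⊤⁆ ≤ subPow (⊤ : Subgroup G) (powerfulExponent p))
    (hM : IsCoatom M) {u z : G} (hu : u ∈ M) (hz : z ∉ M) (huz : closure {u, z} = ⊤) :
    M = zpowers u ⊔ subPow (⊤ : Subgroup G) p := by
  set V := subPow (⊤ : Subgroup G) p
  have := hG.normal_of_isCoatom hM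
  have hVM : V ≤ M := subPow_le_iff.2 fun g _ => hG.pow_mem_of_isCoatom hM g
  have : (zpowers u ⊔ V).Normal := commutator_top_left_le_iff.1 <|
    (commutator_mono le_top le_top).trans <|
      hpow.trans ((subPow_powerfulExponent_le ⊤ p).trans le_sup_right)
  refine le_antisymm (fun g hg => ?_) (sup_le (zpowers_le.2 hu) hVM)
  have hsup : (zpowers u ⊔ V) ⊔ zpowers z = ⊤ := eq_top_iff.2 <| huz ▸ (closure_le _).2 <| by
    rintro _ (rfl | rfl)
    · exact mem_sup_left (mem_sup_left (mem_zpowers _))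
    · exact mem_sup_right (mem_zpowers _)
  obtain ⟨m, hm, -, ⟨k, rfl⟩, rfl⟩ := mem_sup_of_normal_left.1 (hsup ▸ mem_top g)
  have hzk : z ^ k ∈ M := (M.mul_mem_cancel_left (sup_le (zpowers_le.2 hu) hVM hm)).1 hg
  obtain ⟨j, rfl⟩ := prime_dvd_of_zpow_mem hz (hG.pow_mem_of_isCoatom hM z) hzk
  have hzpj : z ^ ((p : ℤ) * j) ∈ V := by
    rw [zpow_mul, zpow_natCast]
    exact zpow_mem (pow_mem_subPow (mem_top z) p) j
  exact mul_mem hm (mem_sup_right hzpj)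

theorem IsPGroup.commutator_le_subPow_of_isCoatom (hG : IsPGroup p G)
    (hpow : ⁅(⊤ : Subgroup G), ⊤⁆ ≤ subPow (⊤ : Subgroup G) (powerfulExponent p)) {a b : G}
    (hab : closure {a, b} = ⊤) (hM : IsCoatom M) : ⁅M, M⁆ ≤ subPow M (powerfulExponent p) := by
  obtain ⟨u, hu, z, hz, huz⟩ := hG.exists_closure_pair_eq_top_of_isCoatom hab hM
  have hMV := hG.eq_zpowers_sup_subPow_of_isCoatom hpow hM hu hz huz
  have hVM : subPow (⊤ : Subgroup G) p ≤ M := hMV ▸ le_sup_right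
  calc ⁅M, M⁆ ≤ subPow (subPow (⊤ : Subgroup G) p) (powerfulExponent p) :=
        hMV ▸ commutator_zpowers_sup_le (hG.commutator_subPow_top_le hpow) u
    _ ≤ subPow M (powerfulExponent p) := subPow_mono hVM _

theorem IsPGroup.exists_closure_pair_eq_of_isCoatom (hG : IsPGroup p G)
    (hpow : ⁅(⊤ : Subgroup G), ⊤⁆ ≤ subPow (⊤ : Subgroup G) (powerfulExponent p)) {a b : G}
    (hab : closure {a, b} = ⊤) (hM : IsCoatom M) : ∃ g₁ g₂ : G, closure {g₁, g₂} = M := by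
  obtain ⟨u, hu, z, hz, huz⟩ := hG.exists_closure_pair_eq_top_of_isCoatom hab hM
  refine ⟨u, z ^ p, ?_⟩
  rw [hG.eq_zpowers_sup_subPow_of_isCoatom hpow hM hu hz huz,
    hG.subPow_top_eq_closure_pow hpow huz]
  refine le_antisymm ((closure_le _).2 ?_) (sup_le ?_ ((closure_le _).2 ?_))
  · rintro _ (rfl | rfl)
    exacts [mem_sup_left (mem_zpowers _), mem_sup_right (subset_closure (by simp))]
  · exact zpowers_le.2 (subset_closure (by simp))
  · rintro _ (rfl | rfl)
    exacts [pow_mem (subset_closure (by simp)) p, subset_closure (by simp)]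

end MaximalSubgroups

theorem commutator_le_subPow_subgroupOf_iff {G : Type*} [Group G] {H M : Subgroup G} {n : ℕ}
    (hHM : H ≤ M) :
    ⁅H.subgroupOf M, H.subgroupOf M⁆ ≤ subPow (H.subgroupOf M) n ↔ ⁅H, H⁆ ≤ subPow H n := by
  rw [← commutator_le_subPow_map_iff M.subtype M.subtype_injective, subgroupOf_map_subtype,
    inf_eq_left.2 hHM]

theorem exists_closure_pair_eq_top_of_closure_pair_eq {G : Type*} [Group G] {M : Subgroup G}
    {g₁ g₂ : G} (h : closure {g₁, g₂} = M) : ∃ x₁ x₂ : M, closure {x₁, x₂} = ⊤ := by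
  subst h
  refine ⟨⟨g₁, subset_closure (by simp)⟩, ⟨g₂, subset_closure (by simp)⟩, ?_⟩
  apply map_injective (Subgroup.closure _).subtype_injective
  rw [MonoidHom.map_closure, Set.image_pair, ← MonoidHom.range_eq_map, range_subtype]
  rfl

theorem IsPGroup.commutator_le_subPow_of_closure_pair_eq_top {p : ℕ} [Fact p.Prime] {G : Type*}
    [hGrp : Group G] [Finite G] (hG : IsPGroup p G)
    (hpow : ⁅(⊤ : Subgroup G), ⊤⁆ ≤ subPow (⊤ : Subgroup G) (powerfulExponent p)) {a b : G}
    (hab : closure {a, b} = ⊤) (H : Subgroup G) : ⁅H, H⁆ ≤ subPow H (powerfulExponent p) := by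
  induction G using Finite.induction_subsingleton_or_nontrivial generalizing hGrp with
  | hbase G => simp [Subsingleton.elim H ⊥]
  | hstep G ih =>
    obtain rfl | ⟨M, hM, hHM⟩ := eq_top_or_exists_le_coatom H
    · exact hpow
    obtain ⟨g₁, g₂, hM₁₂⟩ := hG.exists_closure_pair_eq_of_isCoatom hpow hab hM
    obtain ⟨x₁, x₂, hx₁₂⟩ := exists_closure_pair_eq_top_of_closure_pair_eq hM₁₂
    obtain ⟨z, hz⟩ : ∃ z, z ∉ M := by
      by_contra! h
      exact hM.1 (eq_top_iff.2 fun z _ => h z)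
    rw [← commutator_le_subPow_subgroupOf_iff hHM]
    refine ih M (Finite.card_subtype_lt hz) (hG.to_subgroup M) ?_ hx₁₂ _
    rw [← subgroupOf_self, commutator_le_subPow_subgroupOf_iff le_rfl]
    exact hG.commutator_le_subPow_of_isCoatom hpow hab hM

/-- Every subgroup of a `2`-generated powerful finite `p`-group is powerful. -/
theorem subgroup_powerful_of_two_generated_powerful
    {p : ℕ} [Fact p.Prime] {G : Type*} [Group G] [Finite G]
    (hG : IsPGroup p G) (hGpow : IsPowerfulSubgroup p (⊤ : Subgroup G))
    (hgen : ∃ a b : G, (⊤ : Subgroup G) = Subgroup.closure {a, b})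
    (H : Subgroup G) :
    IsPowerfulSubgroup p H := by
  obtain ⟨a, b, hab⟩ := hgen
  rw [isPowerfulSubgroup_iff] at hGpow ⊢
  exact hG.commutator_le_subPow_of_closure_pair_eq_top hGpow hab.symm H
end

section
/- Let G be a group, N ≤ L ≤ G with N normal in G, and x ∈ G. If (1) every element of L/N is of the form [xN, gN] for some g ∈ G, and (2) every element of N is of the form [x,h] for some h ∈ G, then every element of L is of the form [x,g] for some g ∈ G. -/
open scoped commutatorElement

/-!
If `y N = ⁅x N, g N⁆`, then `n := ⁅x, g⁆⁻¹ y` lies in `N`, and so does its conjugate `g⁻¹ n g`,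
which by hypothesis is `⁅x, h⁆` for some `h`. The identity `⁅x, g h⁆ = ⁅x, g⁆ g ⁅x, h⁆ g⁻¹`
then gives `y = ⁅x, g h⁆`.
-/

theorem exists_eq_commutatorElement_of_mk_eq {G : Type*} [Group G] {N : Subgroup G} [N.Normal]
    {x y g : G} (hN : ∀ n ∈ N, ∃ h : G, n = ⁅x, h⁆)
    (hy : (y : G ⧸ N) = ⁅(x : G ⧸ N), (g : G ⧸ N)⁆) :
    ∃ g' : G, y = ⁅x, g'⁆ := by
  have hn : ⁅x, g⁆⁻¹ * y ∈ N := by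
    rw [← QuotientGroup.eq, hy]
    exact map_commutatorElement (QuotientGroup.mk' N) x g
  obtain ⟨h, hh⟩ := hN _ (Subgroup.Normal.conj_mem' ‹_› _ hn g)
  refine ⟨g * h, ?_⟩
  rw [commutatorElement_mul_right_eq_mul_conj, ← hh]
  group

theorem commutator_cover_of_quotient_cover_general
    {G : Type*} [Group G] (N L : Subgroup G) [N.Normal] (x : G)
    (h1 : ∀ y ∈ L, ∃ g : G, (y : G ⧸ N) = ⁅(x : G ⧸ N), (g : G ⧸ N)⁆)
    (h2 : ∀ n ∈ N, ∃ h : G, n = ⁅x, h⁆) :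
    ∀ y ∈ L, ∃ g : G, y = ⁅x, g⁆ := by
  intro y hy
  obtain ⟨g, hg⟩ := h1 y hy
  exact exists_eq_commutatorElement_of_mk_eq h2 hg

/-- Lifting a commutator covering from a quotient: if `N ≤ L ≤ G` with `N ⊴ G`,
every element of `L/N` is a commutator of `xN` in `G/N`, and every element of
`N` is a commutator of `x` in `G`, then every element of `L` is a commutator
of `x` in `G`. -/
theorem commutator_cover_of_quotient_cover
    {G : Type*} [Group G] (N L : Subgroup G) [N.Normal] (hNL : N ≤ L) (x : G)
    (h1 : ∀ y ∈ L, ∃ g : G, (y : G ⧸ N) = ⁅(x : G ⧸ N), (g : G ⧸ N)⁆)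
    (h2 : ∀ n ∈ N, ∃ h : G, n = ⁅x, h⁆) :
    ∀ y ∈ L, ∃ g : G, y = ⁅x, g⁆ :=
  commutator_cover_of_quotient_cover_general N L x h1 h2
end

section
/- Let G be a group, N ≤ L ≤ G with N normal in G, x ∈ G, and S ⊆ G with [L,S] ⊆ N. If L/N is generated by the cosets [x,s]N for s ∈ S, then every element of L/N equals [xN, yN] for some y in the subgroup ⟨S⟩N/N; in particular L/N ⊆ K_{xN}(G/N). -/
/-!
Modulo `N`, the subgroup `⟨S⟩` centralizes `L`. In any group, if `a` commutes with `⁅x, b⁆`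
then `⁅x, a * b⁆ = ⁅x, a⁆ * ⁅x, b⁆`, and if `a` commutes with `⁅x, a⁆` then
`⁅x, a⁻¹⁆ = ⁅x, a⁆⁻¹`. Hence the elements of `L/N` of the form `⁅xN, z⁆` with `z ∈ ⟨S⟩N/N`
are closed under products and inverses; they include the generators `⁅xN, sN⁆`, so they
exhaust `L/N`.
-/

open scoped commutatorElement

section CommutatorsWithFixedElement

variable {Q : Type*} [Group Q]

theorem commutatorElement_mul_right_of_commute {x a b : Q} (h : Commute a ⁅x, b⁆) :
    ⁅x, a * b⁆ = ⁅x, a⁆ * ⁅x, b⁆ := by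
  have hexp : ⁅x, a * b⁆ = ⁅x, a⁆ * (a * ⁅x, b⁆ * a⁻¹) := by group
  rw [hexp, h.eq, mul_inv_cancel_right]

theorem commutatorElement_inv_right_of_commute {x a : Q} (h : Commute a ⁅x, a⁆) :
    ⁅x, a⁻¹⁆ = ⁅x, a⁆⁻¹ := by
  have hexp : ⁅x, a⁻¹⁆ = a⁻¹ * ⁅x, a⁆⁻¹ * a := by group
  rw [hexp, mul_assoc, ← h.inv_right.eq, inv_mul_cancel_left]

theorem exists_mem_closure_commutatorElement_eq {K : Subgroup Q} (x : Q) {T : Set Q}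
    (hT : T ⊆ Subgroup.centralizer (K : Set Q))
    (hK : K = Subgroup.closure {c | ∃ t ∈ T, c = ⁅x, t⁆}) :
    ∀ k ∈ K, ∃ z ∈ Subgroup.closure T, k = ⁅x, z⁆ := by
  subst hK
  have hcomm : ∀ z ∈ Subgroup.closure T,
      ∀ a ∈ Subgroup.closure {c | ∃ t ∈ T, c = ⁅x, t⁆}, Commute z a := fun z hz a ha =>
    (Subgroup.mem_centralizer_iff.mp ((Subgroup.closure_le _).mpr hT hz) a ha).symm
  intro k hk
  induction hk using Subgroup.closure_induction with
  | mem c hc =>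
    obtain ⟨t, ht, rfl⟩ := hc
    exact ⟨t, Subgroup.subset_closure ht, rfl⟩
  | one => exact ⟨1, one_mem _, by simp⟩
  | mul a b _ hb iha ihb =>
    obtain ⟨za, hza, rfl⟩ := iha
    obtain ⟨zb, hzb, rfl⟩ := ihb
    exact ⟨za * zb, mul_mem hza hzb,
      (commutatorElement_mul_right_of_commute (hcomm za hza _ hb)).symm⟩
  | inv a ha iha =>
    obtain ⟨z, hz, rfl⟩ := iha
    exact ⟨z⁻¹, inv_mem hz, (commutatorElement_inv_right_of_commute (hcomm z hz _ ha)).symm⟩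

end CommutatorsWithFixedElement

theorem QuotientGroup.image_mk_subset_centralizer_map {G : Type*} [Group G] (N : Subgroup G)
    [N.Normal] {L : Subgroup G} {S : Set G} (hLS : ∀ l ∈ L, ∀ s ∈ S, ⁅l, s⁆ ∈ N) :
    QuotientGroup.mk' N '' S ⊆
      Subgroup.centralizer (L.map (QuotientGroup.mk' N) : Set (G ⧸ N)) := by
  rintro _ ⟨s, hs, rfl⟩
  rw [SetLike.mem_coe, Subgroup.mem_centralizer_iff]
  rintro _ ⟨l, hl, rfl⟩
  have h : QuotientGroup.mk' N ⁅l, s⁆ = 1 := (QuotientGroup.eq_one_iff _).mpr (hLS l hl s hs)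
  rw [map_commutatorElement] at h
  exact commutatorElement_eq_one_iff_mul_comm.mp h

theorem quotient_cover_of_central_generation_general
    {G : Type*} [Group G] (N L : Subgroup G) [N.Normal] (x : G)
    (S : Set G) (hLS : ∀ l ∈ L, ∀ s ∈ S, ⁅l, s⁆ ∈ N)
    (hgen : L.map (QuotientGroup.mk' N) =
      Subgroup.closure {c : G ⧸ N | ∃ s ∈ S, c = ⁅(x : G ⧸ N), (s : G ⧸ N)⁆}) :
    (∀ y ∈ L, ∃ z : G, z ∈ Subgroup.closure S ⊔ N ∧
        (y : G ⧸ N) = ⁅(x : G ⧸ N), (z : G ⧸ N)⁆) ∧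
    (∀ y ∈ L, ∃ g : G, (y : G ⧸ N) = ⁅(x : G ⧸ N), (g : G ⧸ N)⁆) := by
  have hgen_image : L.map (QuotientGroup.mk' N) =
      Subgroup.closure {c | ∃ t ∈ QuotientGroup.mk' N '' S, c = ⁅(x : G ⧸ N), t⁆} := by
    simpa only [Set.exists_mem_image, QuotientGroup.mk'_apply] using hgen
  have main : ∀ y ∈ L, ∃ z : G, z ∈ Subgroup.closure S ⊔ N ∧
      (y : G ⧸ N) = ⁅(x : G ⧸ N), (z : G ⧸ N)⁆ := by
    intro y hy
    obtain ⟨_, hz, hyz⟩ := exists_mem_closure_commutatorElement_eq (x : G ⧸ N)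
      (QuotientGroup.image_mk_subset_centralizer_map N hLS) hgen_image _ ⟨y, hy, rfl⟩
    rw [← MonoidHom.map_closure] at hz
    obtain ⟨z, hz, rfl⟩ := hz
    exact ⟨z, le_sup_left (a := Subgroup.closure S) hz, hyz⟩
  exact ⟨main, fun y hy => (main y hy).imp fun _ => And.right⟩

/-- If `N ≤ L ≤ G` with `N ⊴ G`, `S ⊆ G` with `[L,S] ⊆ N`, and `L/N` is
generated by the cosets `[x,s]N` for `s ∈ S`, then every element of `L/N` is a
commutator of `xN` with an element of `⟨S⟩N/N`; in particular with an element
of `G/N`. -/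
theorem quotient_cover_of_central_generation
    {G : Type*} [Group G] (N L : Subgroup G) [N.Normal] (hNL : N ≤ L) (x : G)
    (S : Set G) (hLS : ∀ l ∈ L, ∀ s ∈ S, ⁅l, s⁆ ∈ N)
    (hgen : L.map (QuotientGroup.mk' N) =
      Subgroup.closure {c : G ⧸ N | ∃ s ∈ S, c = ⁅(x : G ⧸ N), (s : G ⧸ N)⁆}) :
    (∀ y ∈ L, ∃ z : G, z ∈ Subgroup.closure S ⊔ N ∧
        (y : G ⧸ N) = ⁅(x : G ⧸ N), (z : G ⧸ N)⁆) ∧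
    (∀ y ∈ L, ∃ g : G, (y : G ⧸ N) = ⁅(x : G ⧸ N), (g : G ⧸ N)⁆) :=
  quotient_cover_of_central_generation_general N L x S hLS hgen
end

section
/- Let G be a finite p-group with G' cyclic. Then there exists x ∈ G such that every element of G' is of the form [x,g] for some g ∈ G. -/
/-!
Some commutator `D = ⁅a, b⁆` generates `G'`, since `G'` is a cyclic `p`-group generated by
commutators. Conjugation by any `u` acts on `G'` as `D ↦ D ^ t` with `t ≡ 1 mod p`, because `u`
has `p`-power order. If `g` acts so on `D = ⁅x, g⁆`, then
`⁅x, g ^ k⁆ = D ^ (1 + t + ⋯ + t ^ (k - 1))`, and by lifting the exponent these geometric sums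
run through all residues modulo `|G'| = p ^ n`, provided `t ≡ 1 mod 4` when `p = 2`. For `p = 2`
this is arranged by replacing `(a, b)` with `(b, a)` or `(a, a * b)`.
-/

open Finset
open scoped commutatorElement

lemma Prime.not_dvd_of_dvd_sub_one {R : Type*} [CommRing R] {p t : R} (hp : Prime p)
    (ht : p ∣ t - 1) : ¬ p ∣ t :=
  fun h ↦ hp.not_isUnit (isUnit_of_dvd_one ((dvd_sub_right h).mp ht))

lemma geom_sum_add {R : Type*} [Semiring R] (x : R) (m n : ℕ) :
    ∑ i ∈ range (m + n), x ^ i = ∑ i ∈ range m, x ^ i + x ^ m * ∑ i ∈ range n, x ^ i := by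
  rw [sum_range_add, mul_sum]
  simp only [pow_add]

lemma emultiplicity_geom_sum {p : ℕ} (hp : p.Prime) {t : ℤ} (ht : (p : ℤ) ∣ t - 1)
    (ht4 : p = 2 → (4 : ℤ) ∣ t - 1) (k : ℕ) :
    emultiplicity (p : ℤ) (∑ i ∈ range k, t ^ i) = emultiplicity (p : ℤ) k := by
  rcases eq_or_ne t 1 with rfl | ht1
  · simp
  have hpt := (Nat.prime_iff_prime_int.mp hp).not_dvd_of_dvd_sub_one ht
  have lte : emultiplicity (p : ℤ) (t ^ k - 1 ^ k)
      = emultiplicity (p : ℤ) (t - 1) + emultiplicity (p : ℤ) k := by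
    rcases eq_or_ne p 2 with rfl | hp2
    · exact Int.two_pow_sub_pow' k (ht4 rfl) hpt
    · rw [Int.emultiplicity_pow_sub_pow hp (hp.odd_of_ne_two hp2) ht hpt,
        Int.natCast_emultiplicity]
  rw [one_pow, ← mul_geom_sum, emultiplicity_mul (Nat.prime_iff_prime_int.mp hp)] at lte
  refine WithTop.add_left_cancel (finiteMultiplicity_iff_emultiplicity_ne_top.mp ?_) lte
  exact Int.finiteMultiplicity_iff.mpr ⟨by simpa using hp.one_lt.ne', sub_ne_zero.mpr ht1⟩

lemma pow_dvd_geom_sum_iff {p : ℕ} (hp : p.Prime) {t : ℤ} (ht : (p : ℤ) ∣ t - 1)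
    (ht4 : p = 2 → (4 : ℤ) ∣ t - 1) (n k : ℕ) :
    (p : ℤ) ^ n ∣ ∑ i ∈ range k, t ^ i ↔ (p : ℤ) ^ n ∣ k := by
  rw [pow_dvd_iff_le_emultiplicity, pow_dvd_iff_le_emultiplicity, emultiplicity_geom_sum hp ht ht4]

lemma exists_geom_sum_modEq {p : ℕ} (hp : p.Prime) {t : ℤ} (ht : (p : ℤ) ∣ t - 1)
    (ht4 : p = 2 → (4 : ℤ) ∣ t - 1) (n : ℕ) (j : ℤ) :
    ∃ k : ℕ, ∑ i ∈ range k, t ^ i ≡ j [ZMOD p ^ n] := by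
  have : NeZero (p ^ n) := ⟨pow_ne_zero n hp.ne_zero⟩
  let f : Fin (p ^ n) → ZMod (p ^ n) := fun k ↦ ((∑ i ∈ range k, t ^ i : ℤ) : ZMod (p ^ n))
  have hf : Function.Injective f := by
    refine Function.Injective.of_lt_imp_ne fun a b hab heq ↦ ?_
    obtain ⟨d, hd⟩ := Nat.exists_eq_add_of_lt (Fin.lt_def.mp hab)
    have hdvd : (p : ℤ) ^ n ∣ t ^ (a : ℕ) * ∑ i ∈ range (d + 1), t ^ i := by
      have := (ZMod.intCast_eq_intCast_iff_dvd_sub _ _ _).mp heq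
      rwa [hd, add_assoc, geom_sum_add, add_sub_cancel_left, Nat.cast_pow] at this
    have hcop : IsCoprime ((p : ℤ) ^ n) (t ^ (a : ℕ)) :=
      (((Nat.prime_iff_prime_int.mp hp).coprime_iff_not_dvd).mpr
        ((Nat.prime_iff_prime_int.mp hp).not_dvd_of_dvd_sub_one ht)).pow
    have hd1 := (pow_dvd_geom_sum_iff hp ht ht4 n (d + 1)).mp (hcop.dvd_of_dvd_mul_left hdvd)
    have := Nat.le_of_dvd d.succ_pos (by exact_mod_cast hd1)
    omega
  obtain ⟨k, hk⟩ := ((Fintype.bijective_iff_injective_and_card f).mpr ⟨hf, by simp⟩).surjective j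
  exact ⟨k, by simpa using (ZMod.intCast_eq_intCast_iff _ _ _).mp hk⟩

section Group

variable {G : Type*} [Group G]

lemma conj_pow_eq_zpow_pow {u D : G} {t : ℤ} (h : u * D * u⁻¹ = D ^ t) (m : ℕ) :
    u ^ m * D * (u ^ m)⁻¹ = D ^ (t ^ m) := by
  induction m with
  | zero => simp
  | succ m ih =>
    rw [pow_succ', pow_succ', zpow_mul, ← h, conj_zpow, ← ih]
    group

lemma dvd_sub_one_of_conj_eq_zpow {p : ℕ} [Fact p.Prime] {u D : G} {t : ℤ} {e : ℕ}
    (h : u * D * u⁻¹ = D ^ t) (hu : u ^ p ^ e = 1) (hD : p ∣ orderOf D) : (p : ℤ) ∣ t - 1 := by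
  have hfix : t ^ p ^ e ≡ 1 [ZMOD orderOf D] := by
    rw [← zpow_eq_zpow_iff_modEq, ← conj_pow_eq_zpow_pow h, hu]
    simp
  have hmod : t ^ p ^ e ≡ 1 [ZMOD p] := hfix.of_dvd (Int.natCast_dvd_natCast.mpr hD)
  rw [← ZMod.intCast_eq_intCast_iff, Int.cast_pow, ZMod.pow_card_pow] at hmod
  exact (ZMod.intCast_eq_intCast_iff_dvd_sub _ _ _).mp hmod.symm

lemma IsPGroup.exists_dvd_sub_one_conj_eq_zpow {p : ℕ} [Fact p.Prime] (hG : IsPGroup p G)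
    {u D : G} (hmem : u * D * u⁻¹ ∈ Subgroup.zpowers D) :
    ∃ t : ℤ, (p : ℤ) ∣ t - 1 ∧ u * D * u⁻¹ = D ^ t := by
  obtain ⟨t, ht⟩ := Subgroup.mem_zpowers_iff.mp hmem
  by_cases hD : p ∣ orderOf D
  · obtain ⟨e, hu⟩ := hG u
    exact ⟨t, dvd_sub_one_of_conj_eq_zpow ht.symm hu hD, ht.symm⟩
  · obtain ⟨e, he⟩ := hG D
    have hcop : (orderOf D).Coprime (p ^ e) :=
      (((Nat.Prime.coprime_iff_not_dvd Fact.out).mpr hD).pow_left e).symm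
    have hD1 : D = 1 := orderOf_eq_one_iff.mp (hcop.eq_one_of_dvd (orderOf_dvd_of_pow_eq_one he))
    exact ⟨1, by simp, by simp [hD1]⟩

lemma IsPGroup.exists_orderOf_eq_natCard_of_closure_eq {p : ℕ} [Fact p.Prime]
    {K : Subgroup G} [Finite K] [IsCyclic K] (hK : IsPGroup p K) {S : Set G}
    (hS : Subgroup.closure S = K) (hne : S.Nonempty) : ∃ s ∈ S, orderOf s = Nat.card K := by
  have hp : p.Prime := Fact.out
  obtain ⟨n, hn⟩ := hK.exists_card_eq
  by_contra! hS'
  have hsK : ∀ s ∈ S, s ∈ K := fun s hs ↦ hS ▸ Subgroup.subset_closure hs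
  cases n with
  | zero =>
    obtain ⟨s, hs⟩ := hne
    exact hS' s hs (by simpa [hn] using K.orderOf_dvd_natCard (hsK s hs))
  | succ m =>
    have hpow : ∀ s ∈ S, s ^ p ^ m = 1 := by
      intro s hs
      obtain ⟨i, hi, hsi⟩ := (Nat.dvd_prime_pow hp).mp (hn ▸ K.orderOf_dvd_natCard (hsK s hs))
      have : i ≠ m + 1 := fun h ↦ hS' s hs (by rw [hsi, h, hn])
      exact orderOf_dvd_iff_pow_eq_one.mp (hsi ▸ pow_dvd_pow p (by omega))
    have hKpow : ∀ y ∈ K, y ^ p ^ m = 1 := by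
      intro y hy
      rw [← hS] at hy
      induction hy using Subgroup.closure_induction with
      | mem s hs => exact hpow s hs
      | one => exact one_pow _
      | mul y z hy hz ihy ihz =>
        rw [Commute.mul_pow (setLike_mul_comm (hS ▸ hy) (hS ▸ hz)), ihy, ihz, one_mul]
      | inv y _ ihy => rw [inv_pow, ihy, inv_one]
    have hexp : Monoid.exponent K ∣ p ^ m :=
      Monoid.exponent_dvd_of_forall_pow_eq_one fun y ↦ Subtype.ext (hKpow y y.2)
    rw [IsCyclic.exponent_eq_card, hn] at hexp
    exact absurd ((Nat.pow_dvd_pow_iff_le_right hp.one_lt).mp hexp) (by omega)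

lemma commutatorElement_pow_right_eq_zpow_geom_sum {x g : G} {t : ℤ}
    (h : g * ⁅x, g⁆ * g⁻¹ = ⁅x, g⁆ ^ t) (k : ℕ) :
    ⁅x, g ^ k⁆ = ⁅x, g⁆ ^ ∑ i ∈ range k, t ^ i := by
  induction k with
  | zero => simp
  | succ k ih =>
    rw [pow_succ', commutatorElement_mul_right_eq_mul_conj, ih, mul_assoc _ g, mul_assoc,
      ← conj_zpow, h, ← zpow_mul, ← zpow_one_add, geom_sum_succ, add_comm]

lemma exists_commutatorElement_conj_eq_zpow_four_dvd_sub_one {a b : G} {ta tb : ℤ}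
    (ha : a * ⁅a, b⁆ * a⁻¹ = ⁅a, b⁆ ^ ta) (hb : b * ⁅a, b⁆ * b⁻¹ = ⁅a, b⁆ ^ tb)
    (hta : 2 ∣ ta - 1) (htb : 2 ∣ tb - 1) :
    ∃ x g : G, ∃ t : ℤ, orderOf ⁅x, g⁆ = orderOf ⁅a, b⁆ ∧ g * ⁅x, g⁆ * g⁻¹ = ⁅x, g⁆ ^ t ∧
      4 ∣ t - 1 := by
  by_cases htb4 : 4 ∣ tb - 1
  · exact ⟨a, b, tb, rfl, hb, htb4⟩
  by_cases hta4 : 4 ∣ ta - 1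
  · refine ⟨b, a, ta, ?_, ?_, hta4⟩
    · rw [← commutatorElement_inv, orderOf_inv]
    · rw [← commutatorElement_inv, ← conj_inv, ha, inv_zpow]
  have hab : ⁅a, a * b⁆ = ⁅a, b⁆ ^ ta := by
    rw [commutatorElement_mul_right_eq_mul_conj, commutatorElement_self, one_mul, ha]
  refine ⟨a, a * b, ta * tb, ?_, ?_, ?_⟩
  · rw [hab, ← ha]
    exact (MulAut.conj a).orderOf_eq _
  · rw [hab, ← zpow_mul, mul_inv_rev]
    calc a * b * ⁅a, b⁆ ^ ta * (b⁻¹ * a⁻¹) = a * (b * ⁅a, b⁆ ^ ta * b⁻¹) * a⁻¹ := by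
          simp only [mul_assoc]
      _ = ⁅a, b⁆ ^ (ta * (ta * tb)) := by
        rw [← conj_zpow, hb, ← zpow_mul, ← conj_zpow, ha, ← zpow_mul]
        ring_nf
  · have h3a : ta ≡ 3 [ZMOD 4] := by unfold Int.ModEq; omega
    have h3b : tb ≡ 3 [ZMOD 4] := by unfold Int.ModEq; omega
    exact ((h3a.mul h3b).trans (by decide : 3 * 3 ≡ 1 [ZMOD 4])).symm.dvd

lemma IsPGroup.exists_commutatorElement_generator {p : ℕ} [Fact p.Prime] [Finite G]
    (hG : IsPGroup p G) (hcyc : IsCyclic (commutator G)) :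
    ∃ x g : G, ∃ t : ℤ, orderOf ⁅x, g⁆ = Nat.card (commutator G) ∧
      g * ⁅x, g⁆ * g⁻¹ = ⁅x, g⁆ ^ t ∧ (p : ℤ) ∣ t - 1 ∧ (p = 2 → (4 : ℤ) ∣ t - 1) := by
  obtain ⟨_, ⟨a, b, rfl⟩, hD⟩ :=
    (hG.to_subgroup (commutator G)).exists_orderOf_eq_natCard_of_closure_eq
      (commutator_eq_closure G).symm ⟨1, one_mem_commutatorSet G⟩
  have hgen : Subgroup.zpowers ⁅a, b⁆ = commutator G :=
    Subgroup.eq_of_le_of_card_ge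
      (Subgroup.zpowers_le.mpr (Subgroup.commutator_mem_commutator trivial trivial))
      (by rw [Nat.card_zpowers, hD])
  have hact (u : G) : ∃ t : ℤ, (p : ℤ) ∣ t - 1 ∧ u * ⁅a, b⁆ * u⁻¹ = ⁅a, b⁆ ^ t :=
    hG.exists_dvd_sub_one_conj_eq_zpow
      (hgen ▸ Subgroup.Normal.conj_mem inferInstance _ (hgen ▸ Subgroup.mem_zpowers _) u)
  obtain ⟨ta, hta, ha⟩ := hact a
  obtain ⟨tb, htb, hb⟩ := hact b
  rcases eq_or_ne p 2 with rfl | hp2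
  · obtain ⟨x, g, t, hxg, hconj, ht⟩ :=
      exists_commutatorElement_conj_eq_zpow_four_dvd_sub_one ha hb hta htb
    exact ⟨x, g, t, hxg.trans hD, hconj, (by norm_num : (2 : ℤ) ∣ 4).trans ht, fun _ ↦ ht⟩
  · exact ⟨a, b, tb, hD, hb, htb, fun h ↦ absurd h hp2⟩

lemma coe_commutator_eq_setOf_commutatorElement {p n : ℕ} (hp : p.Prime) {x g : G} {t : ℤ}
    (hcard : Nat.card (commutator G) = p ^ n) (hD : orderOf ⁅x, g⁆ = p ^ n)
    (hconj : g * ⁅x, g⁆ * g⁻¹ = ⁅x, g⁆ ^ t) (ht : (p : ℤ) ∣ t - 1)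
    (ht4 : p = 2 → (4 : ℤ) ∣ t - 1) :
    (commutator G : Set G) = {y | ∃ h : G, y = ⁅x, h⁆} := by
  have : Finite (commutator G) := Nat.finite_of_card_ne_zero (by simp [hcard, hp.ne_zero])
  have hgen : Subgroup.zpowers ⁅x, g⁆ = commutator G :=
    Subgroup.eq_of_le_of_card_ge
      (Subgroup.zpowers_le.mpr (Subgroup.commutator_mem_commutator trivial trivial))
      (by rw [Nat.card_zpowers, hD, hcard])
  refine Set.Subset.antisymm (fun y hy ↦ ?_) ?_
  · obtain ⟨j, rfl⟩ := Subgroup.mem_zpowers_iff.mp (hgen ▸ hy : y ∈ Subgroup.zpowers ⁅x, g⁆)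
    obtain ⟨k, hk⟩ := exists_geom_sum_modEq hp ht ht4 n j
    refine ⟨g ^ k, ?_⟩
    rw [commutatorElement_pow_right_eq_zpow_geom_sum hconj, zpow_eq_zpow_iff_modEq, hD]
    exact_mod_cast hk.symm
  · rintro _ ⟨h, rfl⟩
    exact Subgroup.commutator_mem_commutator trivial trivial

end Group

/-- If `G` is a finite `p`-group with cyclic derived subgroup, then every
element of `G'` is a commutator `⁅x, g⁆` for a single suitable `x ∈ G`. -/
theorem derived_subgroup_eq_commutators_of_cyclic
    {p : ℕ} [Fact p.Prime] {G : Type*} [Group G] [Finite G]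
    (hG : IsPGroup p G) (hcyc : IsCyclic (commutator G)) :
    ∃ x : G, (commutator G : Set G) = {y | ∃ g : G, y = ⁅x, g⁆} := by
  obtain ⟨n, hn⟩ := (hG.to_subgroup (commutator G)).exists_card_eq
  obtain ⟨x, g, t, hD, hconj, ht, ht4⟩ := hG.exists_commutatorElement_generator hcyc
  exact ⟨x, coe_commutator_eq_setOf_commutatorElement Fact.out hn (hD.trans hn) hconj ht ht4⟩
end

section
/- Let G be a non-abelian finite p-group. For a subgroup T that is maximal among proper normal subgroups of G contained in G', define D(T) by D(T)/T = Z(G/T), and let D be the union of all such D(T). Then for x ∈ G, one has [x,G] = G' if and only if x ∉ D. -/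
/-!
Since `x T` is central in `G/T` exactly when `[x,G] ≤ T`, the condition `x ∈ D(T)` reads
`[x,G] ≤ T`. Now `[x,G]` is a normal subgroup of `G` inside `G'`; if it is proper, finiteness
lets it grow to a maximal proper `G`-normal subgroup `T` of `G'`, so `x ∈ D(T)`. Conversely
`[x,G] ≤ T < G'` rules out `[x,G] = G'`.
-/

/-- `T` is maximal among the proper subgroups of `G'` that are normal in `G`. -/
def MaxNormalInDerived {G : Type*} [Group G] (T : Subgroup G) : Prop :=
  T.Normal ∧ T < commutator G ∧
    ∀ S : Subgroup G, S.Normal → S < commutator G → T ≤ S → S = T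

open scoped commutatorElement

section commutatorWith

variable {G : Type*} [Group G]

/-- The paper's `[x,G]`. -/
def commutatorWith (x : G) : Subgroup G :=
  Subgroup.closure {y : G | ∃ g : G, y = ⁅x, g⁆}

theorem commutatorWith_le_iff {x : G} {H : Subgroup G} :
    commutatorWith x ≤ H ↔ ∀ g : G, ⁅x, g⁆ ∈ H := by
  simp [commutatorWith, Subgroup.closure_le, Set.subset_def]

theorem commutatorWith_le_commutator (x : G) : commutatorWith x ≤ commutator G :=
  commutatorWith_le_iff.2 fun g => by
    rw [commutator_def]
    exact Subgroup.commutator_mem_commutator (Subgroup.mem_top x) (Subgroup.mem_top g)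

theorem conj_commutatorElement (x g h : G) :
    g * ⁅x, h⁆ * g⁻¹ = ⁅x, g⁆⁻¹ * ⁅x, g * h⁆ := by
  simp only [commutatorElement_def]
  group

instance commutatorWith_normal (x : G) : (commutatorWith x).Normal := by
  refine ⟨fun n hn g => ?_⟩
  induction hn using Subgroup.closure_induction with
  | mem y hy =>
    obtain ⟨h, rfl⟩ := hy
    rw [conj_commutatorElement]
    exact mul_mem (inv_mem (Subgroup.subset_closure ⟨g, rfl⟩))
      (Subgroup.subset_closure ⟨g * h, rfl⟩)
  | one => simp
  | mul a b _ _ ha hb => simpa [mul_assoc] using mul_mem ha hb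
  | inv a _ ha => simpa [mul_assoc] using inv_mem ha

end commutatorWith

theorem exists_maxNormalInDerived_ge {G : Type*} [Group G] [Finite G] (N : Subgroup G)
    [N.Normal] (hN : N < commutator G) : ∃ T, MaxNormalInDerived T ∧ N ≤ T := by
  obtain ⟨T, hNT, ⟨hTn, hTlt⟩, hmax⟩ :=
    Finite.exists_le_maximal (α := Subgroup G) (p := fun S => S.Normal ∧ S < commutator G)
      ⟨inferInstance, hN⟩
  exact ⟨T, ⟨hTn, hTlt, fun S hSn hSlt hTS => le_antisymm (hmax ⟨hSn, hSlt⟩ hTS) hTS⟩, hNT⟩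

theorem commutator_eq_derived_iff_not_mem_D_general
    {G : Type*} [Group G] [Finite G]
    (x : G) :
    Subgroup.closure {y : G | ∃ g : G, y = ⁅x, g⁆} = commutator G ↔
      ¬ ∃ T : Subgroup G, MaxNormalInDerived T ∧ ∀ g : G, ⁅x, g⁆ ∈ T := by
  change commutatorWith x = _ ↔ _
  constructor
  · rintro hx ⟨T, hT, hxT⟩
    exact hT.2.1.not_ge (hx ▸ commutatorWith_le_iff.2 hxT)
  · intro hx
    by_contra hne
    obtain ⟨T, hT, hxT⟩ := exists_maxNormalInDerived_ge (commutatorWith x)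
      ((commutatorWith_le_commutator x).lt_of_ne hne)
    exact hx ⟨T, hT, commutatorWith_le_iff.1 hxT⟩

/-- In a non-abelian finite `p`-group, `[x,G] = G'` if and only if `x` lies in
no `D(T)` (where `D(T)/T = Z(G/T)`, i.e. `x ∈ D(T) ↔ [x,G] ≤ T`), for
`T` maximal among `G`-normal proper subgroups of `G'`. -/
theorem commutator_eq_derived_iff_not_mem_D
    {p : ℕ} [Fact p.Prime] {G : Type*} [Group G] [Finite G]
    (hG : IsPGroup p G) (hnab : ∃ a b : G, a * b ≠ b * a) (x : G) :
    Subgroup.closure {y : G | ∃ g : G, y = ⁅x, g⁆} = commutator G ↔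
      ¬ ∃ T : Subgroup G, MaxNormalInDerived T ∧ ∀ g : G, ⁅x, g⁆ ∈ T :=
  commutator_eq_derived_iff_not_mem_D_general x
end

section
/- Let G be a finite p-group in which every conjugacy class has size at most p (i.e., G has breadth at most 1). Then |G'| ≤ p. -/
/-!
Breadth at most one means every centralizer `C(x)` has index at most `p`. A subgroup of index `p`
in a `p`-group is normal with cyclic quotient, so `G' ≤ C(x)` for all `x`: the group has class at
most two. Then `g ↦ ⁅g, x⁆` is a homomorphism whose image `S x` satisfies `S x * x = xᴳ`, so
`|S x| ≤ p` and a nontrivial `S x` is generated by any of its nontrivial elements. As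
`⁅x, y⁆ ∈ S x ∩ S y`, noncommuting `x`, `y` have `S x = S y`; from this all nontrivial `S x`
coincide, and that common subgroup contains every commutator.
-/

open scoped commutatorElement

theorem Subgroup.index_centralizer_eq_card_isConj {G : Type*} [Group G] (x : G) :
    (Subgroup.centralizer {x}).index = Nat.card {y : G | IsConj x y} := by
  have hstab : (Subgroup.centralizer {x}).index = (MulAction.stabilizer (ConjAct G) x).index := by
    rw [Subgroup.centralizer_eq_comap_stabilizer]
    exact Subgroup.index_comap_of_surjective _ ConjAct.toConjAct.surjective
  rw [hstab, MulAction.index_stabilizer, ← Nat.card_coe_set_eq]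
  congr 2
  ext y
  exact ConjAct.mem_orbit_conjAct.trans isConj_comm

namespace IsPGroup

variable {p : ℕ} [Fact p.Prime] {G : Type*} [Group G] [Finite G]

theorem commutator_le_of_index_le (hG : IsPGroup p G) {H : Subgroup G} (hH : H.index ≤ p) :
    commutator G ≤ H := by
  have hp : p.Prime := Fact.out
  obtain ⟨n, hn⟩ := hG.index H
  rcases n with _ | _ | n
  · simp [Subgroup.index_eq_one.mp hn]
  · rw [pow_one] at hn
    obtain ⟨m, hm⟩ := IsPGroup.iff_card.mp hG
    have hm0 : m ≠ 0 := by
      rintro rfl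
      have := hn ▸ H.index_dvd_card
      simp [hm, hp.ne_one] at this
    have hHn : H.Normal := Subgroup.normal_of_index_eq_minFac_card (by
      rw [hm, hn, hp.pow_minFac hm0])
    have hcyc : IsCyclic (G ⧸ H) :=
      isCyclic_of_prime_card (p := p) (by rw [← Subgroup.index_eq_card, hn])
    exact Subgroup.Normal.quotient_commutative_iff_commutator_le.mp inferInstance
  · have := hp.one_lt
    have : p ^ 2 ≤ p ^ (n + 2) := Nat.pow_le_pow_right hp.pos (by omega)
    nlinarith

theorem eq_zpowers_of_card_le (hG : IsPGroup p G) {A : Subgroup G} (hA : Nat.card A ≤ p)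
    {a : G} (ha : a ∈ A) (ha1 : a ≠ 1) : A = Subgroup.zpowers a := by
  have hp : p.Prime := Fact.out
  refine (Subgroup.eq_of_le_of_card_ge (Subgroup.zpowers_le.mpr ha) (hA.trans ?_)).symm
  obtain ⟨k, hk⟩ := IsPGroup.iff_orderOf.mp hG a
  have hk0 : k ≠ 0 := by
    rintro rfl
    exact ha1 (orderOf_eq_one_iff.mp (by rw [hk, pow_zero]))
  rw [Nat.card_zpowers, hk]
  exact Nat.le_self_pow hk0 p

end IsPGroup

section ClassTwo

variable {G : Type*} [Group G] (hc : commutator G ≤ Subgroup.center G)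
include hc

theorem commute_commutatorElement (g h y : G) : Commute y ⁅g, h⁆ :=
  Subgroup.mem_center_iff.mp
    (hc (Subgroup.commutator_mem_commutator (Subgroup.mem_top g) (Subgroup.mem_top h))) y

theorem commutatorElement_mul_left (a b x : G) : ⁅a * b, x⁆ = ⁅a, x⁆ * ⁅b, x⁆ := by
  rw [commutatorElement_mul_left_eq_conj_mul, (commute_commutatorElement hc b x a).eq,
    mul_inv_cancel_right, (commute_commutatorElement hc b x _).eq]

def commutatorElementHom (x : G) : G →* G :=
  MonoidHom.mk' (⁅·, x⁆) (commutatorElement_mul_left hc · · x)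

theorem card_range_commutatorElementHom (x : G) :
    Nat.card (commutatorElementHom hc x).range = Nat.card {y : G | IsConj x y} := by
  have : {y : G | IsConj x y} = (· * x) '' (commutatorElementHom hc x).range := by
    ext y
    simp [isConj_iff, commutatorElementHom, eq_mul_inv_iff_mul_eq, commutatorElement_def]
  rw [this, Nat.card_image_of_injective (mul_left_injective x)]
  rfl

end ClassTwo

theorem IsPGroup.commutator_le_center_of_card_isConj_le {p : ℕ} [Fact p.Prime] {G : Type*}
    [Group G] [Finite G] (hG : IsPGroup p G) (hbr : ∀ x : G, Nat.card {y : G | IsConj x y} ≤ p) :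
    commutator G ≤ Subgroup.center G := by
  intro z hz
  rw [Subgroup.mem_center_iff]
  intro x
  have hx := hG.commutator_le_of_index_le
    ((Subgroup.index_centralizer_eq_card_isConj x).trans_le (hbr x)) hz
  exact Subgroup.mem_centralizer_iff.mp hx x rfl

section Breadth

variable {p : ℕ} [Fact p.Prime] {G : Type*} [Group G] [Finite G] (hG : IsPGroup p G)
  (hc : commutator G ≤ Subgroup.center G)
  (hS : ∀ x : G, Nat.card (commutatorElementHom hc x).range ≤ p)
include hG hS

theorem range_commutatorElementHom_eq_of_ne_one {x y : G} (hxy : ⁅x, y⁆ ≠ 1) :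
    (commutatorElementHom hc x).range = (commutatorElementHom hc y).range := by
  have hx : ⁅x, y⁆ ∈ (commutatorElementHom hc x).range :=
    commutatorElement_inv y x ▸ inv_mem ⟨y, rfl⟩
  have hy : ⁅x, y⁆ ∈ (commutatorElementHom hc y).range := ⟨x, rfl⟩
  rw [hG.eq_zpowers_of_card_le (hS x) hx hxy, hG.eq_zpowers_of_card_le (hS y) hy hxy]

theorem range_commutatorElementHom_eq {a b u h : G} (hau : ⁅a, u⁆ ≠ 1) (hbh : ⁅b, h⁆ ≠ 1) :
    (commutatorElementHom hc u).range = (commutatorElementHom hc h).range := by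
  have key {x y : G} (hxy : ⁅x, y⁆ ≠ 1) := range_commutatorElementHom_eq_of_ne_one hG hc hS hxy
  by_cases hah : ⁅a, h⁆ = 1
  · by_cases hbu : ⁅b, u⁆ = 1
    · have habu : ⁅a * b, u⁆ ≠ 1 := by rwa [commutatorElement_mul_left hc, hbu, mul_one]
      have habh : ⁅a * b, h⁆ ≠ 1 := by rwa [commutatorElement_mul_left hc, hah, one_mul]
      exact (key habu).symm.trans (key habh)
    · exact (key hbu).symm.trans (key hbh)
  · exact (key hau).symm.trans (key hah)

theorem commutator_le_range_commutatorElementHom {a u : G} (hau : ⁅a, u⁆ ≠ 1) :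
    commutator G ≤ (commutatorElementHom hc u).range := by
  rw [commutator_def, Subgroup.commutator_le]
  intro b _ h _
  by_cases hbh : ⁅b, h⁆ = 1
  · rw [hbh]
    exact one_mem _
  · rw [range_commutatorElementHom_eq hG hc hS hau hbh]
    exact ⟨b, rfl⟩

end Breadth

/-- A finite `p`-group of breadth at most `1` (all conjugacy classes of size
at most `p`) has derived subgroup of order at most `p`. -/
theorem card_derived_le_of_breadth_le_one
    {p : ℕ} [Fact p.Prime] {G : Type*} [Group G] [Finite G]
    (hG : IsPGroup p G)
    (hbr : ∀ x : G, Nat.card {y : G | IsConj x y} ≤ p) :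
    Nat.card (commutator G) ≤ p := by
  have hc := hG.commutator_le_center_of_card_isConj_le hbr
  have hS (x : G) : Nat.card (commutatorElementHom hc x).range ≤ p :=
    (card_range_commutatorElementHom hc x).trans_le (hbr x)
  by_cases hab : ∀ a u : G, ⁅a, u⁆ = 1
  · have : commutator G = ⊥ := by
      rw [eq_bot_iff, commutator_def, Subgroup.commutator_le]
      exact fun a _ u _ ↦ (hab a u).symm ▸ one_mem _
    rw [this, Subgroup.card_bot]
    exact (Fact.out : p.Prime).one_le
  · simp only [not_forall] at hab
    obtain ⟨a, u, hau⟩ := hab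
    calc Nat.card (commutator G) ≤ Nat.card (commutatorElementHom hc u).range :=
          Subgroup.card_le_of_le (commutator_le_range_commutatorElementHom hG hc hS hau)
      _ ≤ p := hS u
end
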